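/- arXiv:1408.4053 — 7 statements merged into one kernel-verified Lean document; each statement's English description precedes it below -/
import Mathlib

section
/- Let ω be a real number, let q ≥ 2 and let A, B be positive integers. Then the A×B real matrix M with entries M(a,b) = sin(ω·(a + c·b)), for a ∈ {0,…,A−1}, b ∈ {0,…,B−1} and any fixed real number c, has matrix rank at most 2. In particular, every TT-unfolding matrix [sin(ω(a + q^s b))]_{a ∈ Fin q^s, b ∈ Fin q^{L−s}} of the q-adically folded trigonometric vector (sin(ω n))_{n=0}^{q^L − 1} has rank at most 2, so the TT-rank of the quantized trigonometric vector is at most 2. -/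
/-!
By the addition formula `sin (x + y) = sin x * cos y + cos x * sin y`, the matrix
`[sin (ω (a + c b))]` is the sum of two rank-one matrices.
-/

namespace Matrix

theorem rank_le_of_apply_eq_sum_mul {R : Type*} [CommRing R] [StrongRankCondition R]
    {m n : Type*} [Fintype n] {r : ℕ} (f : Fin r → m → R) (g : Fin r → n → R)
    (M : Matrix m n R) (hM : ∀ a b, M a b = ∑ k, f k a * g k b) : M.rank ≤ r := by
  have hfactor : M = (of fun a k => f k a) * of g := by
    ext a b
    simp only [hM, mul_apply, of_apply]
  calc M.rank ≤ (of fun a k => f k a).rank := hfactor ▸ rank_mul_le_left _ _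
    _ ≤ Fintype.card (Fin r) := rank_le_card_width _
    _ = r := Fintype.card_fin r

theorem rank_of_sin_add_le_two {m n : Type*} [Fintype n]
    (x : m → ℝ) (y : n → ℝ) : (of fun a b => Real.sin (x a + y b)).rank ≤ 2 :=
  rank_le_of_apply_eq_sum_mul ![fun a => Real.sin (x a), fun a => Real.cos (x a)]
    ![fun b => Real.cos (y b), fun b => Real.sin (y b)] _ fun a b => by
      simp [Fin.sum_univ_two, Real.sin_add]

end Matrix

/-- The matrix `M(a,b) = sin(ω (a + c b))` has rank at most 2; in particular every
TT-unfolding matrix `[sin(ω (a + q^s b))]` of the `q`-adically folded trigonometric vector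
`(sin(ω n))_{n<q^L}` has rank at most 2, so the TT-rank of the quantized trigonometric
vector is at most 2. -/
theorem sin_matrix_rank_le_two :
    (∀ (ω c : ℝ) (A B : ℕ), 0 < A → 0 < B →
      ∀ M : Matrix (Fin A) (Fin B) ℝ,
        (∀ a b, M a b = Real.sin (ω * ((a : ℝ) + c * (b : ℝ)))) → M.rank ≤ 2) ∧
    (∀ (ω : ℝ) (q L s : ℕ), 2 ≤ q → s ≤ L →
      ∀ U : Matrix (Fin (q ^ s)) (Fin (q ^ (L - s))) ℝ,
        (∀ a b, U a b = Real.sin (ω * ((a : ℝ) + (q : ℝ) ^ s * (b : ℝ)))) → U.rank ≤ 2) := by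
  have key : ∀ (ω c : ℝ) (A B : ℕ) (M : Matrix (Fin A) (Fin B) ℝ),
      (∀ a b, M a b = Real.sin (ω * ((a : ℝ) + c * (b : ℝ)))) → M.rank ≤ 2 := by
    intro ω c A B M hM
    obtain rfl : M = .of fun a b => Real.sin (ω * a + ω * (c * b)) :=
      Matrix.ext fun a b => by rw [hM, mul_add, Matrix.of_apply]
    exact Matrix.rank_of_sin_add_le_two _ _
  exact ⟨fun ω c A B _ _ => key ω c A B, fun ω q L s _ _ => key ω ((q : ℝ) ^ s) _ _⟩
end

section
/- Let d ≥ 2, N ≥ 2 and h > 0. Define the tensor T : (Fin N)^d → ℝ by T(i_1,…,i_d) = Σ_{ℓ=1}^{d} (i_ℓ + 1)·h, i.e. T is obtained by sampling the function f(x) = x_1 + … + x_d at the grid points x_ℓ ∈ {h, 2h, …, Nh}. Then the canonical rank of T is exactly d: T can be written as a sum of d rank-1 tensors, and it cannot be written as a sum of fewer than d rank-1 tensors. -/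
/-!
If `∑ ℓ, g ℓ (i ℓ) + μ = ∑ r, c r * ∏ ℓ, u r ℓ (i ℓ)` and `g` in the last variable takes two
different values at `a` and `b`, subtracting the slices `i_last = a` and `i_last = b` gives a
constant nonzero combination `∑ r, c r (u r last a - u r last b) · (rank-one term in the other
variables)`. Hence some term `r₀` has a nonzero coefficient, and a multiple of this identity
can be subtracted from the slice `i_last = b` to kill term `r₀`: what remains is the sum tensor
in one variable fewer (shifted by a constant) with one term fewer. Induction on `d` gives `d ≤ R`.
-/

open Finset

variable {K α : Type*} {d : ℕ}

/-- Weighted CP format: the weights make the class closed under rescaling single terms,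
even for `d = 0`, where every unweighted rank-one term is `1`. -/
def HasCPDecomposition [CommSemiring K] (R : ℕ) (T : (Fin d → α) → K) : Prop :=
  ∃ (c : Fin R → K) (u : Fin R → Fin d → α → K), ∀ i, T i = ∑ r, c r * ∏ ℓ, u r ℓ (i ℓ)

theorem HasCPDecomposition.of_weight_eq_zero [CommSemiring K] {R : ℕ} {T : (Fin d → α) → K}
    (c : Fin (R + 1) → K) (u : Fin (R + 1) → Fin d → α → K) (r₀ : Fin (R + 1)) (hr₀ : c r₀ = 0)
    (hT : ∀ i, T i = ∑ r, c r * ∏ ℓ, u r ℓ (i ℓ)) : HasCPDecomposition R T :=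
  ⟨c ∘ r₀.succAbove, u ∘ r₀.succAbove, fun i => by
    rw [hT, Fin.sum_univ_succAbove _ r₀, hr₀, zero_mul, zero_add]; rfl⟩

theorem HasCPDecomposition.exists_pred_add_const [Field K] {R : ℕ} {T : (Fin d → α) → K}
    {g : α → K} {a b : α} (hab : g a ≠ g b)
    (hT : HasCPDecomposition R fun i : Fin (d + 1) → α => T (Fin.init i) + g (i (Fin.last d))) :
    ∃ R', R = R' + 1 ∧ ∃ μ, HasCPDecomposition R' fun i => T i + μ := by
  obtain ⟨c, u, hcu⟩ := hT
  set P : Fin R → (Fin d → α) → K := fun r i => ∏ ℓ, u r ℓ.castSucc (i ℓ)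
  set w : Fin R → α → K := fun r j => c r * u r (Fin.last d) j
  have slice : ∀ i j, T i + g j = ∑ r, P r i * w r j := fun i j => by
    have := hcu (Fin.snoc i j)
    simp only [Fin.init_snoc, Fin.snoc_last, Fin.prod_univ_castSucc, Fin.snoc_castSucc] at this
    rw [this]
    exact sum_congr rfl fun r _ => by simp only [P, w]; ring
  set β : Fin R → K := fun r => w r a - w r b
  have hβ : ∀ i, ∑ r, P r i * β r = g a - g b := fun i => by
    simp only [β, mul_sub, sum_sub_distrib, ← slice]; ring
  obtain ⟨r₀, -, hr₀⟩ := exists_ne_zero_of_sum_ne_zero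
    ((hβ fun _ => a).trans_ne (sub_ne_zero.2 hab))
  have hβr₀ : β r₀ ≠ 0 := right_ne_zero_of_mul hr₀
  obtain ⟨R', rfl⟩ := Nat.exists_eq_succ_of_ne_zero (Fin.pos r₀).ne'
  set t := w r₀ b / β r₀
  refine ⟨R', rfl, g b - t * (g a - g b), .of_weight_eq_zero (fun r => w r b - t * β r)
    (fun r ℓ => u r ℓ.castSucc) r₀ (by simp [t, hβr₀]) fun i => ?_⟩
  calc T i + (g b - t * (g a - g b)) = ∑ r, P r i * w r b - t * ∑ r, P r i * β r := by
        rw [← slice, hβ]; ring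
    _ = _ := by simp only [mul_sum, ← sum_sub_distrib, P]; congr! 1; ring

theorem le_of_hasCPDecomposition_sum_add [Field K] {R : ℕ} {g : Fin d → α → K}
    (hg : ∀ ℓ, ∃ a b, g ℓ a ≠ g ℓ b) {μ : K}
    (hT : HasCPDecomposition R fun i => ∑ ℓ, g ℓ (i ℓ) + μ) : d ≤ R := by
  induction d generalizing R μ with
  | zero => exact R.zero_le
  | succ d ih =>
    obtain ⟨a, b, hab⟩ := hg (Fin.last d)
    simp only [Fin.sum_univ_castSucc, add_right_comm _ (g _ _)] at hT
    obtain ⟨R', rfl, μ', hR'⟩ := hT.exists_pred_add_const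
      (T := fun i => ∑ ℓ, g ℓ.castSucc (i ℓ) + μ) hab
    simp only [add_assoc] at hR'
    exact Nat.succ_le_succ (ih (fun ℓ => hg ℓ.castSucc) hR')

theorem sum_apply_eq_sum_prod_ite [CommSemiring K] (g : Fin d → α → K) (i : Fin d → α) :
    ∑ ℓ, g ℓ (i ℓ) = ∑ r, ∏ ℓ, if ℓ = r then g ℓ (i ℓ) else 1 := by
  simp [prod_ite_eq']

theorem sampled_sum_tensor_canonical_rank_eq_dim_general
    (d N : ℕ) (hN : 2 ≤ N) (h : ℝ) (hh : 0 < h)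
    (T : (Fin d → Fin N) → ℝ)
    (hT : ∀ i, T i = ∑ ℓ : Fin d, ((i ℓ : ℕ) + 1 : ℝ) * h) :
    (∃ u : Fin d → Fin d → Fin N → ℝ,
        ∀ i, T i = ∑ r : Fin d, ∏ ℓ : Fin d, u r ℓ (i ℓ)) ∧
    (∀ R : ℕ, R < d →
        ¬ ∃ u : Fin R → Fin d → Fin N → ℝ,
            ∀ i, T i = ∑ r : Fin R, ∏ ℓ : Fin d, u r ℓ (i ℓ)) := by
  set g : Fin d → Fin N → ℝ := fun _ x => ((x : ℕ) + 1 : ℝ) * h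
  refine ⟨⟨fun r ℓ x => if ℓ = r then g ℓ x else 1, fun i => (hT i).trans (sum_apply_eq_sum_prod_ite g i)⟩, ?_⟩
  rintro R hR ⟨u, hu⟩
  have hg : ∀ ℓ, ∃ a b, g ℓ a ≠ g ℓ b := fun _ =>
    ⟨⟨0, by omega⟩, ⟨1, by omega⟩, by norm_num [g, hh.ne']⟩
  have hT' : HasCPDecomposition R fun i => ∑ ℓ, g ℓ (i ℓ) + 0 :=
    ⟨1, u, fun i => by simpa [g, ← hT] using hu i⟩
  exact hR.not_ge (le_of_hasCPDecomposition_sum_add hg hT')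

/-- The tensor obtained by sampling `f(x) = x₁ + ⋯ + x_d` on the grid
`{h, 2h, …, Nh}^d` has canonical rank exactly `d`: it is a sum of `d` rank-1 tensors,
but not a sum of fewer than `d` rank-1 tensors. -/
theorem sampled_sum_tensor_canonical_rank_eq_dim
    (d N : ℕ) (hd : 2 ≤ d) (hN : 2 ≤ N) (h : ℝ) (hh : 0 < h)
    (T : (Fin d → Fin N) → ℝ)
    (hT : ∀ i, T i = ∑ ℓ : Fin d, ((i ℓ : ℕ) + 1 : ℝ) * h) :
    (∃ u : Fin d → Fin d → Fin N → ℝ,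
        ∀ i, T i = ∑ r : Fin d, ∏ ℓ : Fin d, u r ℓ (i ℓ)) ∧
    (∀ R : ℕ, R < d →
        ¬ ∃ u : Fin R → Fin d → Fin N → ℝ,
            ∀ i, T i = ∑ r : Fin R, ∏ ℓ : Fin d, u r ℓ (i ℓ)) :=
  sampled_sum_tensor_canonical_rank_eq_dim_general d N hN h hh T hT
end

section
/- Let d ≥ 2, N ≥ 2 and h > 0, and let X_ℓ ∈ ℝ^N be the vector X_ℓ(i) = (i+1)h. Define the tensor T : (Fin N)^d → ℝ by T(i) = Σ_{ℓ=1}^{d} X_ℓ(i_ℓ), and for each ε ≠ 0 define T_ε : (Fin N)^d → ℝ by T_ε(i) = ( Π_{ℓ=1}^{d} (1 + ε X_ℓ(i_ℓ)) − 1 ) / ε. Then (a) each T_ε has canonical rank at most 2, being the difference of two rank-1 tensors scaled by 1/ε, and (b) T_ε converges to T entrywise (equivalently, in any norm on the finite-dimensional tensor space) as ε → 0. Consequently the tensor T, whose canonical rank is d, is a limit of tensors of canonical rank at most 2, so the set of tensors of canonical rank ≤ 2 is not closed when d ≥ 3. -/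
/-!
Since `T_ε = ε⁻¹ (⊗_ℓ (1 + ε X_ℓ) − ⊗_ℓ 1)`, it has rank at most 2, and `T_ε → T` because
`T(i)` is the derivative at `ε = 0` of `∏_ℓ (1 + ε X_ℓ(i_ℓ))`.

`T` itself is not of rank at most 2: restricted to a `2 × 2 × 2` subtensor in three modes it
becomes `f(a) + g(b) + h(c)` with `f, g, h` non-constant. Its slices `M_a = T(a, ·, ·)` satisfy
`det(λ M₀ + μ M₁) = −δ (λ + μ)²` with `δ = (g₁ − g₀)(h₁ − h₀) ≠ 0`. For a decomposition
`M_a = p_a (q ⊗ r) + s_a (t ⊗ w)` the same determinant is `B (λ p₀ + μ p₁)(λ s₀ + μ s₁)`, so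
both linear forms are multiples of `λ + μ`: `p₀ = p₁`, `s₀ = s₁`, hence `M₀ = M₁` and `f` is
constant.
-/

open Finset Function Filter Topology

section

variable {K ι ι' α β : Type*}

def canonicalRankLE (K : Type*) [CommSemiring K] (ι α : Type*) [Fintype ι] (R : ℕ) :
    Set ((ι → α) → K) :=
  {S | ∃ u : Fin R → ι → α → K, ∀ i, S i = ∑ r : Fin R, ∏ ℓ : ι, u r ℓ (i ℓ)}

theorem mul_prod_eq_prod_update [CommMonoid K] [Fintype ι] [DecidableEq ι]
    (c : K) (u : ι → α → K) (ℓ₀ : ι) (i : ι → α) :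
    c * ∏ ℓ, u ℓ (i ℓ) = ∏ ℓ, update u ℓ₀ (c • u ℓ₀) ℓ (i ℓ) := by
  simp only [Fintype.prod_eq_mul_prod_compl ℓ₀, update_self, Pi.smul_apply, smul_eq_mul,
    mul_assoc]
  congr 2
  refine Finset.prod_congr rfl fun ℓ hℓ => ?_
  rw [update_of_ne (by simpa using hℓ)]

theorem mul_sub_mem_canonicalRankLE_two [CommRing K] [Fintype ι] [Nonempty ι]
    (c : K) (u v : ι → α → K) :
    (fun i => c * (∏ ℓ, u ℓ (i ℓ) - ∏ ℓ, v ℓ (i ℓ))) ∈ canonicalRankLE K ι α 2 := by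
  classical
  obtain ⟨ℓ₀⟩ := ‹Nonempty ι›
  refine ⟨![update u ℓ₀ (c • u ℓ₀), update v ℓ₀ (-c • v ℓ₀)], fun i => ?_⟩
  simp only [Fin.sum_univ_two, Matrix.cons_val_zero, Matrix.cons_val_one,
    ← mul_prod_eq_prod_update]
  ring

@[to_additive]
theorem Fintype.prod_extend_apply [CommMonoid K] [Fintype ι] [Fintype ι'] [DecidableEq ι]
    (f : ι → α → K) {e : ι' → ι} (he : Injective e) (j : ι' → α) (i₀ : ι → α) :
    ∏ ℓ, f ℓ (extend e j i₀ ℓ) =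
      (∏ ℓ ∈ (univ.map ⟨e, he⟩)ᶜ, f ℓ (i₀ ℓ)) * ∏ m, f (e m) (j m) := by
  rw [← prod_compl_mul_prod (univ.map ⟨e, he⟩), prod_map]
  congr 1
  · refine Finset.prod_congr rfl fun ℓ hℓ => ?_
    rw [extend_apply' _ _ _ (by simpa using hℓ)]
  · simp [he.extend_apply]

theorem comp_extend_mem_canonicalRankLE [CommSemiring K] [Fintype ι] [Fintype ι']
    [Nonempty ι'] {R : ℕ} {S : (ι → α) → K} (hS : S ∈ canonicalRankLE K ι α R)
    {e : ι' → ι} (he : Injective e) (g : β → α) (i₀ : ι → α) :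
    (fun j : ι' → β => S (extend e (g ∘ j) i₀)) ∈ canonicalRankLE K ι' β R := by
  classical
  obtain ⟨u, hu⟩ := hS
  obtain ⟨m₀⟩ := ‹Nonempty ι'›
  let c r := ∏ ℓ ∈ (univ.map ⟨e, he⟩)ᶜ, u r ℓ (i₀ ℓ)
  refine ⟨fun r => update (fun m b => u r (e m) (g b)) m₀ (c r • fun b => u r (e m₀) (g b)),
    fun j => ?_⟩
  simp only [hu, Fintype.prod_extend_apply _ he, ← mul_prod_eq_prod_update, c, comp_apply]

theorem eq_and_eq_of_mul_of_mul_of_add [CommRing K] [IsDomain K] {p₀ p₁ s₀ s₁ c : K}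
    (hc : c ≠ 0) (h₀ : p₀ * s₀ = c) (h₁ : p₁ * s₁ = c) (h₀₁ : p₀ * s₁ + p₁ * s₀ = 2 * c) :
    p₀ = p₁ ∧ s₀ = s₁ := by
  have hsq : c * (p₀ - p₁) ^ 2 = 0 := by
    linear_combination (-p₀ ^ 2) * h₁ + (-p₁ ^ 2) * h₀ + p₀ * p₁ * h₀₁
  have hp : p₀ = p₁ := sub_eq_zero.1 (pow_eq_zero_iff two_ne_zero |>.1
    ((mul_eq_zero.1 hsq).resolve_left hc))
  have hp₀ : p₀ ≠ 0 := left_ne_zero_of_mul (h₀.trans_ne hc)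
  refine ⟨hp, mul_left_cancel₀ hp₀ ?_⟩
  rw [h₀, hp, h₁]

theorem eq_of_add_add_eq_two_rank_one [CommRing K] [IsDomain K]
    {p q r s t w f g h : Fin 2 → K} (hg : g 0 ≠ g 1) (hh : h 0 ≠ h 1)
    (H : ∀ a b c, p a * q b * r c + s a * t b * w c = f a + g b + h c) : f 0 = f 1 := by
  set B := (q 0 * t 1 - q 1 * t 0) * (r 0 * w 1 - r 1 * w 0)
  set δ := (g 1 - g 0) * (h 1 - h 0)
  have hδ : -δ ≠ 0 :=
    neg_ne_zero.2 (mul_ne_zero (sub_ne_zero.2 hg.symm) (sub_ne_zero.2 hh.symm))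
  -- `p a * B * s a` and `-δ` are two expressions for `det M_a`; `hmixed` is their polarization.
  have hdet : ∀ a, p a * B * s a = -δ := fun a => by
    have hf : (f a + g 0 + h 0) * (f a + g 1 + h 1) - (f a + g 0 + h 1) * (f a + g 1 + h 0)
        = -δ := by ring
    rw [← H, ← H, ← H, ← H] at hf
    linear_combination hf
  have hmixed : p 0 * B * s 1 + p 1 * B * s 0 = 2 * -δ := by
    have hf : (f 0 + g 0 + h 0) * (f 1 + g 1 + h 1) + (f 1 + g 0 + h 0) * (f 0 + g 1 + h 1)
        - (f 0 + g 0 + h 1) * (f 1 + g 1 + h 0) - (f 1 + g 0 + h 1) * (f 0 + g 1 + h 0)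
        = 2 * -δ := by ring
    simp only [← H] at hf
    linear_combination hf
  obtain ⟨hpB, hs⟩ := eq_and_eq_of_mul_of_mul_of_add hδ (hdet 0) (hdet 1) hmixed
  have hB : B ≠ 0 := right_ne_zero_of_mul (left_ne_zero_of_mul ((hdet 0).trans_ne hδ))
  have hp : p 0 = p 1 := mul_right_cancel₀ hB hpB
  linear_combination H 1 0 0 - H 0 0 0 + q 0 * r 0 * hp + t 0 * w 0 * hs

theorem sum_notMem_canonicalRankLE_two [CommRing K] [IsDomain K] [Fintype ι]
    (x : ι → α → K) {e : Fin 3 → ι} (he : Injective e) (a : Fin 2 → α)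
    (hx : ∀ m, x (e m) (a 0) ≠ x (e m) (a 1)) :
    (fun i => ∑ ℓ, x ℓ (i ℓ)) ∉ canonicalRankLE K ι α 2 := by
  classical
  intro hS
  obtain ⟨u, hu⟩ := comp_extend_mem_canonicalRankLE hS he a (fun _ => a 0)
  let C := ∑ ℓ ∈ (univ.map ⟨e, he⟩)ᶜ, x ℓ (a 0)
  have H : ∀ b₀ b₁ b₂, u 0 0 b₀ * u 0 1 b₁ * u 0 2 b₂ + u 1 0 b₀ * u 1 1 b₁ * u 1 2 b₂ =
      (C + x (e 0) (a b₀)) + x (e 1) (a b₁) + x (e 2) (a b₂) := fun b₀ b₁ b₂ => by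
    have := hu ![b₀, b₁, b₂]
    simp only [Fintype.sum_extend_apply _ he, Fin.sum_univ_three, Fin.prod_univ_three,
      Fin.sum_univ_two, comp_apply, Matrix.cons_val_zero, Matrix.cons_val_one,
      Matrix.cons_val_two, Matrix.tail_cons, Matrix.head_cons] at this
    linear_combination -this
  exact hx 0 (add_left_cancel (eq_of_add_add_eq_two_rank_one (hx 1) (hx 2) H))

theorem tendsto_prod_one_add_mul_sub_one_div {𝕜 : Type*} [NontriviallyNormedField 𝕜]
    (s : Finset ι) (y : ι → 𝕜) :
    Tendsto (fun ε => (∏ ℓ ∈ s, (1 + ε * y ℓ) - 1) / ε) (𝓝[≠] 0) (𝓝 (∑ ℓ ∈ s, y ℓ)) := by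
  classical
  have hderiv : HasDerivAt (fun ε => ∏ ℓ ∈ s, (1 + ε * y ℓ)) (∑ ℓ ∈ s, y ℓ) 0 := by
    simpa using HasDerivAt.fun_finsetProd (u := s) fun ℓ _ =>
      ((hasDerivAt_id (0 : 𝕜)).mul_const (y ℓ)).const_add 1
  refine (hasDerivAt_iff_tendsto_slope.1 hderiv).congr fun ε => ?_
  simp [slope_def_field]

end

/-- Non-closedness of the set of canonical tensors of bounded rank: the rank-`d` tensor
`T(i) = Σ_ℓ X_ℓ(i_ℓ)` is the entrywise limit, as `ε → 0`, of the tensors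
`T_ε(i) = (Π_ℓ (1 + ε X_ℓ(i_ℓ)) − 1)/ε`, each of canonical rank at most 2; hence for
`d ≥ 3` the set of tensors of canonical rank at most 2 is not closed. -/
theorem rank_two_tensors_not_closed
    (d N : ℕ) (hd : 2 ≤ d) (hN : 2 ≤ N) (h : ℝ) (hh : 0 < h)
    (X : Fin d → Fin N → ℝ) (hX : ∀ ℓ i, X ℓ i = ((i : ℕ) + 1 : ℝ) * h)
    (T : (Fin d → Fin N) → ℝ) (hT : ∀ i, T i = ∑ ℓ : Fin d, X ℓ (i ℓ))
    (Tε : ℝ → (Fin d → Fin N) → ℝ)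
    (hTε : ∀ ε i, Tε ε i = ((∏ ℓ : Fin d, (1 + ε * X ℓ (i ℓ))) - 1) / ε) :
    (∀ ε : ℝ, ε ≠ 0 →
        ∃ u : Fin 2 → Fin d → Fin N → ℝ,
          ∀ i, Tε ε i = ∑ r : Fin 2, ∏ ℓ : Fin d, u r ℓ (i ℓ)) ∧
    (∀ i, Filter.Tendsto (fun ε => Tε ε i) (nhdsWithin 0 {(0 : ℝ)}ᶜ) (nhds (T i))) ∧
    (3 ≤ d → ¬ IsClosed {S : (Fin d → Fin N) → ℝ |
        ∃ u : Fin 2 → Fin d → Fin N → ℝ,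
          ∀ i, S i = ∑ r : Fin 2, ∏ ℓ : Fin d, u r ℓ (i ℓ)}) := by
  have : Nonempty (Fin d) := ⟨⟨0, by omega⟩⟩
  have hrank : ∀ ε : ℝ, ε ≠ 0 → Tε ε ∈ canonicalRankLE ℝ (Fin d) (Fin N) 2 := fun ε _ => by
    convert mul_sub_mem_canonicalRankLE_two ε⁻¹ (fun ℓ j => 1 + ε * X ℓ j) (fun _ _ => 1)
      using 2 with i
    simp [hTε, div_eq_inv_mul]
  have hlim : ∀ i, Tendsto (fun ε => Tε ε i) (𝓝[≠] 0) (𝓝 (T i)) := fun i => by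
    simpa only [hTε, hT] using tendsto_prod_one_add_mul_sub_one_div univ fun ℓ => X ℓ (i ℓ)
  refine ⟨hrank, hlim, fun hd3 hclosed => ?_⟩
  change IsClosed (canonicalRankLE ℝ (Fin d) (Fin N) 2) at hclosed
  have hT_mem : T ∈ closure (canonicalRankLE ℝ (Fin d) (Fin N) 2) :=
    mem_closure_of_tendsto (tendsto_pi_nhds.2 hlim) (eventually_mem_nhdsWithin.mono hrank)
  rw [hclosed.closure_eq, funext hT] at hT_mem
  refine sum_notMem_canonicalRankLE_two X (Fin.castLE_injective hd3) (Fin.castLE hN)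
    (fun m => ?_) hT_mem
  simp [hX, hh.ne']
end

section
/- Let N ≥ 2, d ≥ 2, let A = tridiag(−1, 2, −1) ∈ ℝ^{N×N} (the 1D finite difference Laplacian) and let I_N be the N×N identity matrix. Define the d-dimensional discrete Laplacian Δ_d as the matrix indexed by (Fin d → Fin N) × (Fin d → Fin N) with entries Δ_d(i,j) = Σ_{ℓ=1}^{d} A(i_ℓ, j_ℓ) · Π_{k≠ℓ} [i_k = j_k], i.e. the Kronecker sum A⊗I⊗…⊗I + I⊗A⊗…⊗I + … + I⊗…⊗I⊗A. Then the canonical (Kronecker) rank of Δ_d is exactly d: Δ_d is a sum of d Kronecker-rank-1 matrices, and it is not a sum of fewer than d matrices of the form B^{(1)}⊗…⊗B^{(d)}. -/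
/-!
Writing `B r := I ⊗ ⋯ ⊗ A ⊗ ⋯ ⊗ I` (with `A` in slot `r`) exhibits `Δ` as a sum of `d`
Kronecker-rank-1 matrices. For the lower bound, look at the row of `Δ` indexed by `(0, …, 0)`: it is
the tensor `W(u, v) = ∑ₗ u ⊗ ⋯ ⊗ v ⊗ ⋯ ⊗ u` with `u = e₀` and `v = (2, -1, 0, …)`, and every
decomposition of `Δ` restricts to a decomposition of this row. Since `u` and `v` are linearly
independent there are functionals `φ, ψ` dual to them. Applying `φ` and `ψ` to the last factor of a
decomposition of `W(u, v) + μ u^{⊗m}` into `R` pure tensors gives decompositions of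
`W(u, v) + μ u^{⊗(m-1)}` and of `u^{⊗(m-1)} ≠ 0` into the same `R` pure tensors; eliminating one
term between the two leaves `R - 1` terms for `W(u, v) + μ' u^{⊗(m-1)}`, so by induction `R ≥ m`.
-/

open Finset Function

section Tensor

variable {K α ι : Type*}

def pureTensor [CommMonoid K] [Fintype ι] (u : ι → α → K) (x : ι → α) : K :=
  ∏ k, u k (x k)

def wTensor [CommSemiring K] [Fintype ι] [DecidableEq ι] (u v : α → K) : (ι → α) → K :=
  ∑ ℓ, pureTensor (update (fun _ => u) ℓ v)

theorem Finset.prod_apply_update [CommMonoid K] [Fintype ι] [DecidableEq ι] {β : Type*}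
    (F : ι → β → K) (c : ι → β) (ℓ : ι) (b : β) :
    ∏ k, F k (update c ℓ b k) = F ℓ b * ∏ k ∈ univ.erase ℓ, F k (c k) := by
  simp_rw [apply_update F, prod_update_of_mem (mem_univ ℓ), sdiff_singleton_eq_erase]

theorem pureTensor_ne_zero [CommMonoidWithZero K] [NoZeroDivisors K] [Nontrivial K] [Fintype ι]
    {u : ι → α → K} (hu : ∀ k, u k ≠ 0) : pureTensor u ≠ 0 := by
  choose x hx using fun k => ne_iff.mp (hu k)
  intro h
  exact prod_ne_zero_iff.mpr (fun k _ => hx k) (congrFun h x)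

theorem wTensor_apply [CommSemiring K] [Fintype ι] [DecidableEq ι] (u v : α → K) (x : ι → α) :
    wTensor u v x = ∑ ℓ, v (x ℓ) * ∏ k ∈ univ.erase ℓ, u (x k) := by
  simp [wTensor, pureTensor, prod_apply_update fun k (g : α → K) => g (x k)]

theorem Matrix.prod_update_one_apply [CommSemiring K] [Fintype ι] [DecidableEq ι] {n : Type*}
    [DecidableEq n] (A : Matrix n n K) (ℓ : ι) (i j : ι → n) :
    ∏ k, update (fun _ => (1 : Matrix n n K)) ℓ A k (i k) (j k) =
      A (i ℓ) (j ℓ) * ∏ k ∈ univ.erase ℓ, if i k = j k then 1 else 0 := by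
  simp [prod_apply_update (fun k (M : Matrix n n K) => M (i k) (j k)), Matrix.one_apply]

def sliceLast [CommSemiring K] {m : ℕ} (φ : (α → K) →ₗ[K] K) :
    ((Fin (m + 1) → α) → K) →ₗ[K] (Fin m → α) → K :=
  LinearMap.pi fun x => φ ∘ₗ LinearMap.funLeft K K (Fin.snoc (α := fun _ => α) x)

theorem sliceLast_apply [CommSemiring K] {m : ℕ} (φ : (α → K) →ₗ[K] K)
    (F : (Fin (m + 1) → α) → K) (x : Fin m → α) :
    sliceLast φ F x = φ fun t => F (Fin.snoc x t) :=
  rfl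

theorem sliceLast_pureTensor [CommSemiring K] {m : ℕ} (φ : (α → K) →ₗ[K] K)
    (u : Fin (m + 1) → α → K) :
    sliceLast φ (pureTensor u) = φ (u (Fin.last m)) • pureTensor fun k => u k.castSucc := by
  ext x
  have hslice : (fun t => pureTensor u (Fin.snoc x t)) =
      (pureTensor (fun k => u k.castSucc) x) • u (Fin.last m) := by
    ext t
    simp [pureTensor, Fin.prod_univ_castSucc]
  simp [sliceLast_apply, hslice, mul_comm]

theorem sliceLast_wTensor [CommSemiring K] {m : ℕ} (φ : (α → K) →ₗ[K] K) (u v : α → K) :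
    sliceLast φ (wTensor u v) = φ u • wTensor u v + φ v • pureTensor fun _ : Fin m => u := by
  have hlast : (fun k : Fin m => update (fun _ => u) (Fin.last m) v k.castSucc) = fun _ => u :=
    funext fun k => update_of_ne (Fin.castSucc_ne_last k) _ _
  have hcast (ℓ : Fin m) :
      (fun k : Fin m => update (fun _ => u) ℓ.castSucc v k.castSucc) = update (fun _ => u) ℓ v :=
    update_comp_eq_of_injective _ (Fin.castSucc_injective m) ℓ v
  rw [wTensor, map_sum, Fin.sum_univ_castSucc]
  simp only [sliceLast_pureTensor, hlast, hcast, update_self,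
    update_of_ne (Fin.castSucc_ne_last _).symm, wTensor, smul_sum]

theorem sum_smul_sub_div_smul_sum_eq_sum_succAbove [Field K] {V : Type*} [AddCommGroup V]
    [Module K V] {R : ℕ} (a b : Fin (R + 1) → K) (P : Fin (R + 1) → V) {r₀ : Fin (R + 1)}
    (hb : b r₀ ≠ 0) :
    ∑ r, a r • P r - (a r₀ / b r₀) • ∑ r, b r • P r =
      ∑ r : Fin R, (a (r₀.succAbove r) - a r₀ / b r₀ * b (r₀.succAbove r)) • P (r₀.succAbove r) := by
  rw [smul_sum, ← sum_sub_distrib, Fin.sum_univ_succAbove _ r₀]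
  simp [smul_smul, div_mul_cancel₀ _ hb, sub_smul]

section WState

variable [Field K] {u v : α → K} {φ ψ : (α → K) →ₗ[K] K}

theorem wTensor_add_smul_ne_sum_smul_pureTensor (hφu : φ u = 1) (hφv : φ v = 0)
    (hψu : ψ u = 0) (hψv : ψ v = 1) {R m : ℕ} (hRm : R < m) (μ : K) (c : Fin R → K)
    (w : Fin R → Fin m → α → K) :
    wTensor u v + μ • pureTensor (fun _ => u) ≠ ∑ r, c r • pureTensor (w r) := by
  have hu : u ≠ 0 := fun h => by simp [h] at hφu
  induction R using Nat.strong_induction_on generalizing m μ with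
  | _ R ih =>
  obtain ⟨m, rfl⟩ := Nat.exists_eq_add_one_of_ne_zero (Nat.ne_zero_of_lt hRm)
  intro h
  set a := fun r => c r * φ (w r (Fin.last m))
  set b := fun r => c r * ψ (w r (Fin.last m))
  set P := fun r => pureTensor fun k : Fin m => w r k.castSucc
  have h₀ : wTensor u v + μ • pureTensor (fun _ => u) = ∑ r, a r • P r := by
    simpa [sliceLast_wTensor, sliceLast_pureTensor, hφu, hφv, smul_smul] using
      congrArg (sliceLast φ) h
  have h₁ : pureTensor (fun _ => u) = ∑ r, b r • P r := by
    simpa [sliceLast_wTensor, sliceLast_pureTensor, hψu, hψv, smul_smul] using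
      congrArg (sliceLast ψ) h
  by_cases hb : ∀ r, b r = 0
  · exact pureTensor_ne_zero (fun _ => hu) (h₁.trans (by simp [hb]))
  obtain ⟨r₀, hr₀⟩ := not_forall.mp hb
  obtain ⟨R, rfl⟩ := Nat.exists_eq_add_one_of_ne_zero r₀.pos.ne'
  refine @ih R (by omega) m (by omega) (μ - a r₀ / b r₀)
    (fun r => a (r₀.succAbove r) - a r₀ / b r₀ * b (r₀.succAbove r))
    (fun r k => w (r₀.succAbove r) k.castSucc) ?_
  rw [← sum_smul_sub_div_smul_sum_eq_sum_succAbove a b P hr₀, ← h₀, ← h₁]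
  module

end WState

end Tensor

theorem discrete_laplacian_kronecker_rank_eq_dim_general
    (d N : ℕ) (hN : 2 ≤ N)
    (A : Matrix (Fin N) (Fin N) ℝ)
    (hA : ∀ i j : Fin N, A i j =
      if (i : ℕ) = (j : ℕ) then 2
      else if (i : ℕ) + 1 = (j : ℕ) ∨ (j : ℕ) + 1 = (i : ℕ) then -1 else 0)
    (Δ : Matrix (Fin d → Fin N) (Fin d → Fin N) ℝ)
    (hΔ : ∀ i j, Δ i j = ∑ ℓ : Fin d, A (i ℓ) (j ℓ) *
      ∏ k ∈ Finset.univ.erase ℓ, (if i k = j k then (1 : ℝ) else 0)) :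
    (∃ B : Fin d → Fin d → Matrix (Fin N) (Fin N) ℝ,
        ∀ i j, Δ i j = ∑ r : Fin d, ∏ ℓ : Fin d, B r ℓ (i ℓ) (j ℓ)) ∧
    (∀ R : ℕ, R < d →
        ¬ ∃ B : Fin R → Fin d → Matrix (Fin N) (Fin N) ℝ,
            ∀ i j, Δ i j = ∑ r : Fin R, ∏ ℓ : Fin d, B r ℓ (i ℓ) (j ℓ)) := by
  refine ⟨⟨fun r => update (fun _ => 1) r A, fun i j => by simp [hΔ, Matrix.prod_update_one_apply]⟩,
    ?_⟩
  rintro R hR ⟨B, hB⟩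
  let o : Fin N := ⟨0, by omega⟩
  let l : Fin N := ⟨1, hN⟩
  have hol : o ≠ l := by simp [o, l, Fin.ext_iff]
  have hAoo : A o o = 2 := by simp [hA, o]
  have hAol : A o l = -1 := by simp [hA, o, l]
  refine wTensor_add_smul_ne_sum_smul_pureTensor (u := (1 : Matrix (Fin N) (Fin N) ℝ) o) (v := A o)
    (φ := LinearMap.proj o + (2 : ℝ) • LinearMap.proj l) (ψ := -LinearMap.proj l)
    (by simp [hol]) (by simp [hAoo, hAol]) (by simp [hol]) (by simp [hAol]) hR 0 1
    (fun r ℓ => B r ℓ o) ?_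
  funext j
  simpa [hΔ, wTensor_apply, Matrix.one_apply, pureTensor] using hB (fun _ => o) j

/-- The `d`-dimensional discrete Laplacian (the Kronecker sum of `d` copies of
`tridiag(−1,2,−1)`) has canonical (Kronecker) rank exactly `d`: it is a sum of `d`
Kronecker-rank-1 matrices, but not a sum of fewer than `d` such matrices. -/
theorem discrete_laplacian_kronecker_rank_eq_dim
    (d N : ℕ) (hd : 2 ≤ d) (hN : 2 ≤ N)
    (A : Matrix (Fin N) (Fin N) ℝ)
    (hA : ∀ i j : Fin N, A i j =
      if (i : ℕ) = (j : ℕ) then 2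
      else if (i : ℕ) + 1 = (j : ℕ) ∨ (j : ℕ) + 1 = (i : ℕ) then -1 else 0)
    (Δ : Matrix (Fin d → Fin N) (Fin d → Fin N) ℝ)
    (hΔ : ∀ i j, Δ i j = ∑ ℓ : Fin d, A (i ℓ) (j ℓ) *
      ∏ k ∈ Finset.univ.erase ℓ, (if i k = j k then (1 : ℝ) else 0)) :
    (∃ B : Fin d → Fin d → Matrix (Fin N) (Fin N) ℝ,
        ∀ i j, Δ i j = ∑ r : Fin d, ∏ ℓ : Fin d, B r ℓ (i ℓ) (j ℓ)) ∧
    (∀ R : ℕ, R < d →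
        ¬ ∃ B : Fin R → Fin d → Matrix (Fin N) (Fin N) ℝ,
            ∀ i j, Δ i j = ∑ r : Fin R, ∏ ℓ : Fin d, B r ℓ (i ℓ) (j ℓ)) :=
  discrete_laplacian_kronecker_rank_eq_dim_general d N hN A hA Δ hΔ
end

section
/- Let N ≥ 2, d ≥ 2, let A = tridiag(−1, 2, −1) ∈ ℝ^{N×N} and define the d-dimensional discrete Laplacian Δ_d as the Kronecker sum with entries Δ_d(i,j) = Σ_{ℓ=1}^{d} A(i_ℓ, j_ℓ) · Π_{k≠ℓ} [i_k = j_k] on the index set (Fin d → Fin N)×(Fin d → Fin N). Then for every p with 1 ≤ p ≤ d−1, the TT-unfolding matrix of Δ_d at position p, namely the matrix U_p with row index ((i_1,j_1),…,(i_p,j_p)) and column index ((i_{p+1},j_{p+1}),…,(i_d,j_d)) and entries U_p = Δ_d(i,j), has matrix rank exactly 2. Hence the TT-rank of Δ_d equals 2. -/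
/-!
Splitting the coordinates as `ι ⊕ κ`, the Kronecker sum `Δ` of copies of `A` becomes
`Δ_ι ⊗ I + I ⊗ Δ_κ`, so its unfolding is a sum of two rank-one matrices. Conversely, if
`A x y ≠ 0` with `x ≠ y`, the rows and columns indexed by the constant `y` tuple and by that tuple
with one coordinate changed to `x` form a `2 × 2` minor `[[*, A x y], [A x y, 0]]`, which is
invertible.
-/

/-- Pasting of a `p`-tuple and a `(d-p)`-tuple of indices into a `d`-tuple. -/
def glueIdx {N d p : ℕ} (hp : p ≤ d) (a : Fin p → Fin N) (b : Fin (d - p) → Fin N) :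
    Fin d → Fin N :=
  fun ℓ => if h : (ℓ : ℕ) < p then a ⟨ℓ, h⟩
    else b ⟨(ℓ : ℕ) - p, by have := ℓ.isLt; omega⟩

open Finset

namespace Matrix

theorem rank_vecMulVec_add_vecMulVec_le {m n R : Type*} [Fintype n] [CommSemiring R]
    [StrongRankCondition R] (u u' : m → R) (v v' : n → R) :
    (vecMulVec u v + vecMulVec u' v').rank ≤ 2 := by
  have hfactor : vecMulVec u v + vecMulVec u' v' =
      of (fun a i => ![u a, u' a] i) * of (fun i b => ![v b, v' b] i) := by
    ext a b
    simp [mul_apply, vecMulVec_apply, Fin.sum_univ_two]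
  rw [hfactor]
  exact (rank_mul_le_left _ _).trans
    (by simpa using rank_le_card_width (of fun a i => ![u a, u' a] i))

theorem card_le_rank_of_det_submatrix_ne_zero {m n k F : Type*} [Fintype n] [Fintype k]
    [DecidableEq k] [Field F] (A : Matrix m n F) (r : k → m) (c : k → n)
    (h : (A.submatrix r c).det ≠ 0) : Fintype.card k ≤ A.rank := by
  rw [← rank_of_isUnit _ ((isUnit_iff_isUnit_det _).mpr h.isUnit)]
  exact rank_submatrix_le A r c

section KroneckerSum

variable {α ι κ R : Type*} [Fintype ι] [DecidableEq ι] [Fintype κ] [DecidableEq κ] [DecidableEq α]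
  [CommSemiring R]

def kroneckerSum (A : Matrix α α R) : Matrix (ι → α) (ι → α) R :=
  of fun i j => ∑ ℓ, A (i ℓ) (j ℓ) * ∏ k ∈ univ.erase ℓ, if i k = j k then 1 else 0

def kroneckerSumUnfolding (A : Matrix α α R) :
    Matrix ((ι → α) × (ι → α)) ((κ → α) × (κ → α)) R :=
  of fun a b => kroneckerSum A (Sum.elim a.1 b.1) (Sum.elim a.2 b.2)

variable (A : Matrix α α R)

theorem kroneckerSum_apply (i j : ι → α) :
    kroneckerSum A i j = ∑ ℓ, if ∀ k, k ≠ ℓ → i k = j k then A (i ℓ) (j ℓ) else 0 := by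
  refine sum_congr rfl fun ℓ _ => ?_
  simp only [prod_boole, mem_erase, mem_univ, and_true, mul_ite, mul_one, mul_zero]

theorem kroneckerSum_comp_equiv (e : κ ≃ ι) (i j : ι → α) :
    kroneckerSum A (i ∘ e) (j ∘ e) = kroneckerSum A i j := by
  simp only [kroneckerSum_apply, Function.comp_apply]
  refine Fintype.sum_equiv e _ _ fun ℓ => ?_
  simp only [e.forall_congr_left, e.apply_symm_apply, ne_eq, e.symm_apply_eq]

theorem kroneckerSum_sumElim (i₁ j₁ : ι → α) (i₂ j₂ : κ → α) :
    kroneckerSum A (Sum.elim i₁ i₂) (Sum.elim j₁ j₂) =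
      kroneckerSum A i₁ j₁ * (1 : Matrix (κ → α) (κ → α) R) i₂ j₂ +
        (1 : Matrix (ι → α) (ι → α) R) i₁ j₁ * kroneckerSum A i₂ j₂ := by
  have off_inl (ℓ : ι) : (∀ k, k ≠ Sum.inl ℓ → Sum.elim i₁ i₂ k = Sum.elim j₁ j₂ k) ↔
      (∀ k, k ≠ ℓ → i₁ k = j₁ k) ∧ i₂ = j₂ := by
    simp [Sum.forall, funext_iff]
  have off_inr (ℓ : κ) : (∀ k, k ≠ Sum.inr ℓ → Sum.elim i₁ i₂ k = Sum.elim j₁ j₂ k) ↔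
      i₁ = j₁ ∧ ∀ k, k ≠ ℓ → i₂ k = j₂ k := by
    simp [Sum.forall, funext_iff]
  simp only [kroneckerSum_apply, Fintype.sum_sum_type, off_inl, off_inr, Sum.elim_inl,
    Sum.elim_inr, one_apply]
  by_cases h₁ : i₁ = j₁ <;> by_cases h₂ : i₂ = j₂ <;> simp [h₁, h₂]

theorem kroneckerSum_update_apply (i : ι → α) (ℓ : ι) {x : α} (hx : x ≠ i ℓ) :
    kroneckerSum A (Function.update i ℓ x) i = A x (i ℓ) := by
  rw [kroneckerSum_apply, sum_eq_single ℓ]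
  · rw [if_pos fun k hk => Function.update_of_ne hk _ _, Function.update_self]
  · intro ℓ' _ hℓ'
    refine if_neg fun h => hx ?_
    simpa using h ℓ (Ne.symm hℓ')
  · simp

theorem kroneckerSumUnfolding_eq :
    kroneckerSumUnfolding (ι := ι) (κ := κ) A =
      vecMulVec (fun a => kroneckerSum A a.1 a.2) (fun b => (1 : Matrix _ _ R) b.1 b.2) +
        vecMulVec (fun a => (1 : Matrix _ _ R) a.1 a.2) (fun b => kroneckerSum A b.1 b.2) := by
  ext a b
  simp only [kroneckerSumUnfolding, of_apply, add_apply, vecMulVec_apply, kroneckerSum_sumElim]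

theorem rank_kroneckerSumUnfolding {F : Type*} [Field F] [Fintype α] [Nonempty ι] [Nonempty κ]
    (A : Matrix α α F) {x y : α} (hxy : x ≠ y) (hA : A x y ≠ 0) :
    (kroneckerSumUnfolding (ι := ι) (κ := κ) A).rank = 2 := by
  refine le_antisymm ?_ ?_
  · rw [kroneckerSumUnfolding_eq]
    exact rank_vecMulVec_add_vecMulVec_le _ _ _ _
  obtain ⟨ℓ⟩ := ‹Nonempty ι›
  obtain ⟨ℓ'⟩ := ‹Nonempty κ›
  let rows : Fin 2 → (ι → α) × (ι → α) :=
    ![(Function.const ι y, Function.const ι y),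
      (Function.update (Function.const ι y) ℓ x, Function.const ι y)]
  let cols : Fin 2 → (κ → α) × (κ → α) :=
    ![(Function.const κ y, Function.const κ y),
      (Function.update (Function.const κ y) ℓ' x, Function.const κ y)]
  have hrow : Function.update (Function.const ι y) ℓ x ≠ Function.const ι y :=
    fun h => hxy (by simpa using congrFun h ℓ)
  have hcol : Function.update (Function.const κ y) ℓ' x ≠ Function.const κ y :=
    fun h => hxy (by simpa using congrFun h ℓ')
  have hdet : ((kroneckerSumUnfolding A).submatrix rows cols).det ≠ 0 := by
    rw [det_fin_two]
    simp [kroneckerSumUnfolding_eq, rows, cols, vecMulVec_apply, one_apply, hrow, hcol, hA,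
      kroneckerSum_update_apply A (Function.const ι y) ℓ hxy,
      kroneckerSum_update_apply A (Function.const κ y) ℓ' hxy]
  simpa using card_le_rank_of_det_submatrix_ne_zero _ rows cols hdet

end KroneckerSum

end Matrix

theorem glueIdx_comp_finSumFinEquiv {N d p : ℕ} (hp : p ≤ d) (a : Fin p → Fin N)
    (b : Fin (d - p) → Fin N) :
    glueIdx hp a b ∘ finSumFinEquiv.trans (finCongr (Nat.add_sub_of_le hp)) = Sum.elim a b := by
  funext x
  cases x with
  | inl ℓ => simp [glueIdx]
  | inr m => simp [glueIdx]

/-- Every TT-unfolding matrix of the `d`-dimensional discrete Laplacian (the Kronecker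
sum of `d` copies of `tridiag(−1,2,−1)`), grouping the first `p` index pairs as rows and
the remaining `d − p` pairs as columns, has matrix rank exactly 2; hence the TT-rank of
`Δ_d` equals 2. -/
theorem discrete_laplacian_tt_unfolding_rank_eq_two
    (d N : ℕ) (hN : 2 ≤ N)
    (A : Matrix (Fin N) (Fin N) ℝ)
    (hA : ∀ i j : Fin N, A i j =
      if (i : ℕ) = (j : ℕ) then 2
      else if (i : ℕ) + 1 = (j : ℕ) ∨ (j : ℕ) + 1 = (i : ℕ) then -1 else 0)
    (Δ : Matrix (Fin d → Fin N) (Fin d → Fin N) ℝ)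
    (hΔ : ∀ i j, Δ i j = ∑ ℓ : Fin d, A (i ℓ) (j ℓ) *
      ∏ k ∈ Finset.univ.erase ℓ, (if i k = j k then (1 : ℝ) else 0))
    (p : ℕ) (hp1 : 1 ≤ p) (hp2 : p ≤ d - 1)
    (U : Matrix ((Fin p → Fin N) × (Fin p → Fin N))
        ((Fin (d - p) → Fin N) × (Fin (d - p) → Fin N)) ℝ)
    (hU : ∀ a b, U a b =
      Δ (glueIdx (by omega) a.1 b.1) (glueIdx (by omega) a.2 b.2)) :
    U.rank = 2 := by
  have hp : p ≤ d := by omega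
  have hΔ_eq : Δ = Matrix.kroneckerSum A := Matrix.ext hΔ
  have hU_eq : U = Matrix.kroneckerSumUnfolding A := by
    ext a b
    rw [hU, hΔ_eq, ← Matrix.kroneckerSum_comp_equiv A
      (finSumFinEquiv.trans (finCongr (Nat.add_sub_of_le hp))), glueIdx_comp_finSumFinEquiv,
      glueIdx_comp_finSumFinEquiv]
    rfl
  have : Nonempty (Fin p) := ⟨⟨0, by omega⟩⟩
  have : Nonempty (Fin (d - p)) := ⟨⟨0, by omega⟩⟩
  rw [hU_eq]
  exact Matrix.rank_kroneckerSumUnfolding A (x := ⟨1, hN⟩) (y := ⟨0, by omega⟩)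
    (by simp) (by rw [hA]; norm_num)
end

section
/- For every s > 0 there exist constants c > 0 and c_1 > 0 such that for every natural number p and every real λ ≥ 0, one has e^{−λ s} · (λ/(λ+1))^{p} ≤ c · e^{−c_1 √p}. -/
/-! The factor `(λ/(λ+1))^p = (1 - 1/(λ+1))^p` is at most `e^{-p/(λ+1)}`, so the whole symbol is
at most `e^{-(λ s + p/(λ+1))}`. Writing `λ s = (λ+1) s - s`, AM-GM bounds the exponent below by
`2 √(s p) - s`, whence `c = e^s` and `c₁ = 2 √s`. -/

open Real

lemma div_add_one_le_exp_neg_inv {l : ℝ} (hl : 0 < l + 1) : l / (l + 1) ≤ exp (-(l + 1)⁻¹) := by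
  have h : l / (l + 1) = -(l + 1)⁻¹ + 1 := by field_simp; ring
  rw [h]
  exact add_one_le_exp _

lemma div_add_one_pow_le_exp {l : ℝ} (hl : 0 ≤ l) (p : ℕ) :
    (l / (l + 1)) ^ p ≤ exp (-(p / (l + 1))) := by
  calc (l / (l + 1)) ^ p ≤ exp (-(l + 1)⁻¹) ^ p :=
        pow_le_pow_left₀ (by positivity) (div_add_one_le_exp_neg_inv (by linarith)) p
    _ = exp (-(p / (l + 1))) := by rw [← exp_nat_mul]; ring_nf

lemma two_mul_sqrt_mul_le_mul_add_div {a b x : ℝ} (ha : 0 ≤ a) (hb : 0 ≤ b) (hx : 0 < x) :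
    2 * √(a * b) ≤ a * x + b / x := by
  have hprod : √(a * b) = √(a * x) * √(b / x) := by
    rw [← sqrt_mul (by positivity)]; field_simp
  have h := two_mul_le_add_sq (√(a * x)) (√(b / x))
  rwa [sq_sqrt (by positivity), sq_sqrt (by positivity), mul_assoc, ← hprod] at h

/-- Key variational estimate for the Cayley transform: for every `s > 0` there are
`c, c₁ > 0` such that `e^{−λs} (λ/(λ+1))^p ≤ c e^{−c₁ √p}` for all `p ∈ ℕ` and `λ ≥ 0`. -/
theorem cayley_symbol_decay
    (s : ℝ) (hs : 0 < s) :
    ∃ c c₁ : ℝ, 0 < c ∧ 0 < c₁ ∧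
      ∀ (p : ℕ) (l : ℝ), 0 ≤ l →
        Real.exp (-l * s) * (l / (l + 1)) ^ p ≤ c * Real.exp (-c₁ * Real.sqrt p) := by
  refine ⟨exp s, 2 * √s, exp_pos s, by positivity, fun p l hl => ?_⟩
  have hamgm := two_mul_sqrt_mul_le_mul_add_div hs.le p.cast_nonneg (by linarith : 0 < l + 1)
  rw [sqrt_mul hs.le] at hamgm
  calc exp (-l * s) * (l / (l + 1)) ^ p
      ≤ exp (-l * s) * exp (-(p / (l + 1))) := by gcongr; exact div_add_one_pow_le_exp hl p
    _ = exp (s - (s * (l + 1) + p / (l + 1))) := by rw [← exp_add]; ring_nf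
    _ ≤ exp (s - 2 * (√s * √p)) := by gcongr
    _ = exp s * exp (-(2 * √s) * √p) := by rw [← exp_add]; ring_nf
end

section
/- Let p be a real polynomial of degree at most m, let A, B be positive integers and let c be a real number. Then the A×B real matrix M with entries M(a,b) = p(a + c·b), for a ∈ {0,…,A−1} and b ∈ {0,…,B−1}, has matrix rank at most m+1. In particular, for N = q^L, every TT-unfolding matrix [p(a + q^s b)]_{a ∈ Fin q^s, b ∈ Fin q^{L−s}} of the q-adically folded polynomial vector (p(n))_{n=0}^{N−1} has rank at most m+1, so the QTT-rank of a sampled polynomial of degree m is at most m+1, uniformly in the vector size N. -/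
/-!
Column `b` samples the shifted polynomial `p(X + c b)`, which still has degree at most `m`.
Writing each column through its `m + 1` coefficients factors the matrix as `(a ^ i)` times
an `(m + 1) × B` coefficient matrix, so its rank is at most `m + 1`.
-/

open Polynomial

namespace Matrix

variable {R α β : Type*} [CommSemiring R]

theorem eval_eq_vandermonde_mul_coeff (x : α → R) (q : β → R[X]) (m : ℕ)
    (hq : ∀ b, (q b).natDegree ≤ m) :
    of (fun a b => (q b).eval (x a)) =
      of (fun a (i : Fin (m + 1)) => x a ^ (i : ℕ)) *
        of (fun (i : Fin (m + 1)) b => (q b).coeff i) := by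
  ext a b
  rw [of_apply, eval_eq_sum_range' (Nat.lt_succ_of_le (hq b)), mul_apply,
    ← Fin.sum_univ_eq_sum_range]
  simp only [of_apply, mul_comm]

variable [StrongRankCondition R] [Fintype β]

theorem rank_of_eval_le (x : α → R) (q : β → R[X]) (m : ℕ) (hq : ∀ b, (q b).natDegree ≤ m) :
    (of fun a b => (q b).eval (x a)).rank ≤ m + 1 := by
  rw [eval_eq_vandermonde_mul_coeff x q m hq]
  exact (rank_mul_le_left _ _).trans <| (rank_le_card_width _).trans_eq (Fintype.card_fin _)

theorem rank_of_eval_add_le (p : R[X]) (m : ℕ) (hm : p.natDegree ≤ m) (x : α → R)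
    (y : β → R) : (of fun a b => p.eval (x a + y b)).rank ≤ m + 1 := by
  simpa only [taylor_eval] using
    rank_of_eval_le x (fun b => taylor (y b) p) m fun b => (natDegree_taylor p (y b)).trans_le hm

end Matrix

theorem polynomial_matrix_rank_le_general
    (p : Polynomial ℝ) (m : ℕ) (hm : p.natDegree ≤ m)
    (A B : ℕ) (c : ℝ)
    (M : Matrix (Fin A) (Fin B) ℝ)
    (hM : ∀ a b, M a b = p.eval ((a : ℝ) + c * (b : ℝ))) :
    M.rank ≤ m + 1 := by
  obtain rfl : M = Matrix.of fun (a : Fin A) (b : Fin B) => p.eval ((a : ℝ) + c * (b : ℝ)) :=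
    Matrix.ext hM
  exact Matrix.rank_of_eval_add_le p m hm _ _

/-- A matrix sampled from a polynomial of degree at most `m` along `a + c·b` has rank at
most `m + 1`; in particular every TT-unfolding matrix of the `q`-adically folded
polynomial vector `(p(n))_{n<q^L}` has rank at most `m + 1`, so the QTT-rank of a sampled
polynomial of degree `m` is at most `m + 1`, uniformly in the vector size. -/
theorem polynomial_matrix_rank_le
    (p : Polynomial ℝ) (m : ℕ) (hm : p.natDegree ≤ m)
    (A B : ℕ) (hA : 0 < A) (hB : 0 < B) (c : ℝ)
    (M : Matrix (Fin A) (Fin B) ℝ)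
    (hM : ∀ a b, M a b = p.eval ((a : ℝ) + c * (b : ℝ))) :
    M.rank ≤ m + 1 :=
  polynomial_matrix_rank_le_general p m hm A B c M hM
end
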